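/- arXiv:2510.09527 — 3 statements merged into one kernel-verified Lean document; each statement's English description precedes it below -/
import Mathlib

section
/- Let (G, U, φ) be a self-similar ultragraph, (g, γ) a G-cycle, and x the infinite path γ₁γ₂⋯ built from (g,γ) by γ₁=γ, g₁=g, γ_{n+1}=g_n·γ_n, g_{n+1}=φ(g_n,γ_n). Then x satisfies x = γ(g·x), where g·x = (g·γ₁)(φ(g,γ₁)·γ₂)(φ(g,γ₁γ₂)·γ₃)⋯. -/
/-- A self-similar ultragraph `(G, U, φ)`: an ultragraph with vertex type `V`,
edge type `E`, (singleton) range map `r`, source map `s`, together with an action of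
`G` on vertices and edges by ultragraph automorphisms and a 1-cocycle `φ` satisfying
`φ(gh,e) = φ(g,h·e)φ(h,e)` and `φ(g,e)·s(e) ⊆ g·s(e)`. -/
structure SSU (G V E : Type*) [Group G] where
  r : E → V
  s : E → Set V
  s_ne : ∀ e, (s e).Nonempty
  actV : G → V → V
  actE : G → E → E
  φ : G → E → G
  actV_one : ∀ v, actV 1 v = v
  actV_mul : ∀ g h v, actV (g * h) v = actV g (actV h v)
  actE_one : ∀ e, actE 1 e = e
  actE_mul : ∀ g h e, actE (g * h) e = actE g (actE h e)
  r_act : ∀ g e, r (actE g e) = actV g (r e)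
  s_act : ∀ g e, s (actE g e) = actV g '' s e
  cocycle : ∀ g h e, φ (g * h) e = φ g (actE h e) * φ h e
  restrict : ∀ g e, actV (φ g e) '' s e ⊆ actV g '' s e

variable {G V E : Type*} [Group G]

/-- The action of `G` on finite paths: `g·(αβ) = (g·α)(φ(g,α)·β)`. -/
def SSU.actPath (U : SSU G V E) : G → List E → List E
  | _, [] => []
  | g, e :: l => U.actE g e :: U.actPath (U.φ g e) l

/-- The cocycle extended to finite paths: `φ(g, αβ) = φ(φ(g,α), β)`. -/
def SSU.cocPath (U : SSU G V E) : G → List E → G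
  | g, [] => g
  | g, e :: l => U.cocPath (U.φ g e) l

/-- A finite path: consecutive edges satisfy `r(e_{i+1}) ⊆ s(e_i)`. -/
def SSU.IsPath (U : SSU G V E) (l : List E) : Prop :=
  l.Chain' (fun e f => U.r f ∈ U.s e)

/-- The source `s(α)` of a path (the source of its last edge; `s(ω) = U⁰`). -/
def SSU.sP (U : SSU G V E) (l : List E) : Set V :=
  match l.getLast? with
  | none => Set.univ
  | some e => U.s e

/-- The range `r(α)` of a path (the singleton range of its first edge; `r(ω) = U⁰`). -/
def SSU.rP (U : SSU G V E) (l : List E) : Set V :=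
  match l.head? with
  | none => Set.univ
  | some e => {U.r e}


theorem SSU.cocPath_append (U : SSU G V E) (g : G) (l1 l2 : List E) :
    U.cocPath g (l1 ++ l2) = U.cocPath (U.cocPath g l1) l2 := by
  induction l1 generalizing g with
  | nil => rfl
  | cons e l ih => simp [SSU.cocPath, ih]

/-- Let `(g, γ)` be a `G`-cycle and `x = γ₁γ₂⋯` the infinite path built from it by
`γ₁ = γ, g₁ = g, γ_{n+1} = g_n·γ_n, g_{n+1} = φ(g_n, γ_n)`. Then `x = γ(g·x)`:
at the level of blocks, the `(n+1)`-st block of `x` equals the `(n+1)`-st block of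
`γ(g·x)`, namely `φ(g, γ₁⋯γₙ)·γₙ` (the `n`-th block of
`g·x = (g·γ₁)(φ(g,γ₁)·γ₂)(φ(g,γ₁γ₂)·γ₃)⋯`). -/
theorem gCycle_path_fixed (U : SSU G V E) (g : G) (γ : List E)
    (hγ : γ ≠ []) (hp : U.IsPath γ)
    (hcyc : (fun v => U.actV g v) '' U.rP γ ⊆ U.sP γ)
    (cyc : ℕ → List E × G)
    (h0 : cyc 0 = (γ, g))
    (hsucc : ∀ n, cyc (n + 1) =
      (U.actPath (cyc n).2 (cyc n).1, U.cocPath (cyc n).2 (cyc n).1)) :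
    ∀ n, (cyc (n + 1)).1 =
      U.actPath (U.cocPath g (((List.range n).map fun i => (cyc i).1).flatten)) (cyc n).1 := by
  have key : ∀ n, (cyc n).2 =
      U.cocPath g (((List.range n).map fun i => (cyc i).1).flatten) := by
    intro n
    induction n with
    | zero => simp [h0, SSU.cocPath]
    | succ n ih =>
      rw [hsucc n, ih, List.range_succ, List.map_append, List.flatten_append,
        U.cocPath_append]
      simp [SSU.cocPath_append]
  intro n
  rw [hsucc n, key n]
end

section
/- In the inverse semigroup S_{G,U}, for idempotents q_{(α,A)} and q_{(β,B)}, one has q_{(α,A)} ≤ q_{(β,B)} (i.e., their product equals q_{(α,A)}) if and only if either (1) α = β and A ⊆ B, or (2) α = βγ for some path γ of length ≥ 1 with r(γ) ⊆ B. -/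
variable {G V E : Type*} [Group G]

open scoped Classical in
/-- The multiplication of the inverse semigroup `S_{G,U}` of a self-similar
ultragraph, on quadruples `(α, A, g, β)` (paths are lists, the empty list being the
zero-length path `ω`); `none` plays the role of the zero element. -/
noncomputable def sguMul (U : SSU G V E) :
    (List E × Set V × G × List E) → (List E × Set V × G × List E) →
      Option (List E × Set V × G × List E) :=
  fun x y =>
    let α := x.1; let A := x.2.1; let g := x.2.2.1; let β := x.2.2.2
    let γ := y.1; let B := y.2.1; let h := y.2.2.1; let δ := y.2.2.2
    if β <+: γ ∧ β ≠ γ then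
      -- γ = βε with |ε| ≥ 1
      let ε := γ.drop β.length
      if U.actV g '' U.rP ε ⊆ A then
        some (α ++ U.actPath g ε,
          (U.actV g '' U.sP ε) ∩ (U.actV (U.cocPath g ε) '' B),
          U.cocPath g ε * h, δ)
      else none
    else if γ <+: β ∧ γ ≠ β then
      -- β = γε with |ε| ≥ 1
      let ε := β.drop γ.length
      if U.rP ε ⊆ B then
        some (α, A ∩ (U.actV (g * (U.cocPath h⁻¹ ε)⁻¹ * h⁻¹) '' U.sP β),
          g * (U.cocPath h⁻¹ ε)⁻¹, δ ++ U.actPath h⁻¹ ε)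
      else none
    else if γ = β then
      if (A ∩ U.actV g '' B).Nonempty then some (α, A ∩ U.actV g '' B, g * h, δ)
      else none
    else none

/-!
With trivial group labels every cocycle and path action in the multiplication collapses,
so the product of `q_{(α,A)}` and `q_{(β,B)}` is `q_{(β, s(ε) ∩ B)}` when `β = αε`,
`q_{(α, A ∩ s(α))} = q_{(α,A)}` when `α = βε` and `r(ε) ⊆ B`, `q_{(α, A ∩ B)}` when
`α = β` and `A ∩ B ≠ ∅`, and zero otherwise. Comparing with `q_{(α,A)}` leaves exactly the
two alternatives; in the first one `A ∩ B = A` is nonempty because `A` is.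
-/

theorem List.exists_ne_nil_append_iff {α : Type*} {l l' : List α} {P : List α → Prop} :
    (∃ γ, γ ≠ [] ∧ l = l' ++ γ ∧ P γ) ↔ l' <+: l ∧ l' ≠ l ∧ P (l.drop l'.length) := by
  constructor
  · rintro ⟨γ, hγ, rfl, hP⟩
    exact ⟨List.prefix_append _ _, by simpa using hγ.symm, by simpa using hP⟩
  · rintro ⟨hpre, hne, hP⟩
    refine ⟨_, fun h => hne ?_, (List.prefix_iff_eq_append.mp hpre).symm, hP⟩
    simpa [h] using List.prefix_iff_eq_append.mp hpre

namespace SSU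

variable (U : SSU G V E)

theorem φ_one (e : E) : U.φ 1 e = 1 := by
  simpa [U.actE_one] using (U.cocycle 1 1 e).symm

@[simp]
theorem actPath_one (l : List E) : U.actPath 1 l = l := by
  induction l with
  | nil => rfl
  | cons e l ih => simp [actPath, U.actE_one, U.φ_one, ih]

@[simp]
theorem cocPath_one (l : List E) : U.cocPath 1 l = 1 := by
  induction l with
  | nil => rfl
  | cons e l ih => simp [cocPath, U.φ_one, ih]

@[simp]
theorem image_actV_one (S : Set V) : U.actV 1 '' S = S := by
  simp [U.actV_one]

end SSU

open scoped Classical in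
theorem sguMul_idempotents (U : SSU G V E) (α β : List E) (A B : Set V) :
    sguMul U (α, A, 1, α) (β, B, 1, β) =
      if α <+: β ∧ α ≠ β then
        if U.rP (β.drop α.length) ⊆ A then some (β, U.sP (β.drop α.length) ∩ B, 1, β) else none
      else if β <+: α ∧ β ≠ α then
        if U.rP (α.drop β.length) ⊆ B then some (α, A ∩ U.sP α, 1, α) else none
      else if β = α ∧ (A ∩ B).Nonempty then some (α, A ∩ B, 1, α) else none := by
  unfold sguMul
  simp only [inv_one, mul_one, U.cocPath_one, U.actPath_one, U.image_actV_one]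
  split_ifs <;> grind [List.prefix_iff_eq_append]

theorem sgu_idempotent_le_iff_general (U : SSU G V E) (α β : List E) (A B : Set V)
    (hA : A.Nonempty) (hAs : A ⊆ U.sP α) :
    sguMul U (α, A, 1, α) (β, B, 1, β) = some (α, A, 1, α) ↔
      ((α = β ∧ A ⊆ B) ∨ ∃ γ : List E, γ ≠ [] ∧ α = β ++ γ ∧ U.rP γ ⊆ B) := by
  rw [List.exists_ne_nil_append_iff, sguMul_idempotents]
  have strict_prefix_asymm : α <+: β ∧ α ≠ β → ¬β <+: α := fun h h' =>
    h.2 (List.infix_antisymm h.1.isInfix h'.isInfix)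
  split_ifs with hαβ hrA hβα hrB hEq
  · simp [hαβ.2, hαβ.2.symm, strict_prefix_asymm hαβ]
  · simp [hαβ.2, strict_prefix_asymm hαβ]
  · simp [hβα, hrB, Set.inter_eq_left.mpr hAs]
  · simp [hβα.2.symm, hrB]
  · obtain ⟨rfl, -⟩ := hEq
    simp [Set.inter_eq_left]
  · refine iff_of_false id ?_
    rintro (⟨rfl, hAB⟩ | ⟨hpre, hne, -⟩)
    · exact hEq ⟨rfl, by rwa [Set.inter_eq_left.mpr hAB]⟩
    · exact hβα ⟨hpre, hne⟩

/-- In `S_{G,U}`, for idempotents `q_{(α,A)} = (α,A,1,α)` and `q_{(β,B)} = (β,B,1,β)`,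
one has `q_{(α,A)} ≤ q_{(β,B)}` (their product equals `q_{(α,A)}`) iff either
`α = β` and `A ⊆ B`, or `α = βγ` for some path `γ` of length `≥ 1` with
`r(γ) ⊆ B`. -/
theorem sgu_idempotent_le_iff (U : SSU G V E) (α β : List E) (A B : Set V)
    (hpα : U.IsPath α) (hpβ : U.IsPath β)
    (hA : A.Nonempty) (hAs : A ⊆ U.sP α)
    (hB : B.Nonempty) (hBs : B ⊆ U.sP β) :
    sguMul U (α, A, 1, α) (β, B, 1, β) = some (α, A, 1, α) ↔
      ((α = β ∧ A ⊆ B) ∨ ∃ γ : List E, γ ≠ [] ∧ α = β ++ γ ∧ U.rP γ ⊆ B) :=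
  sgu_idempotent_le_iff_general U α β A B hA hAs
end

section
/- Let (G, U, φ) be a self-similar ultragraph and s = (α, A, g, β) ∈ S_{G,U} with |α| > |β|. If θ_s fixes a tight filter F_{βx} for some infinite path x, then α = βγ for some γ ∈ U^{≥1}, the pair (g, γ) is a G-cycle (g·r(γ) ⊆ s(γ)), and x = γ(g·x). -/
variable {G V E : Type*} [Group G]

/-- The sequence of group elements carried along when `g` acts on the infinite path
`x = x₀x₁x₂⋯`: `g₀ = g`, `g_{k+1} = φ(g_k, x_k)`, so `g_k = φ(g, x₀⋯x_{k-1})`. -/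
def SSU.gSeq (U : SSU G V E) (g : G) (x : ℕ → E) : ℕ → G
  | 0 => g
  | k + 1 => U.φ (U.gSeq g x k) (x k)

/-- The action of `g ∈ G` on an infinite path `x`:
`g·x = (g·x₀)(φ(g,x₀)·x₁)(φ(g,x₀x₁)·x₂)⋯`. -/
def SSU.actStream (U : SSU G V E) (g : G) (x : ℕ → E) : ℕ → E :=
  fun k => U.actE (U.gSeq g x k) (x k)

/-- The concatenation `αx` of a finite path `α` with an infinite path `x`. -/
def appendStream (l : List E) (x : ℕ → E) : ℕ → E :=
  fun k => if h : k < l.length then l.get ⟨k, h⟩ else x (k - l.length)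

/-!
Comparing `βx = α(g·x)` letter by letter on the first `|β|` positions shows `α = βγ` with
`γ = α.drop |β|`, and cancelling the common prefix `β` leaves `x = γ(g·x)`. The first letter of
`γ` is therefore `x₀`, so `g·r(γ) = g·r(x₀) ∈ A ⊆ s(α) = s(γ)`.
-/

theorem appendStream_apply_of_lt {l : List E} (x : ℕ → E) {k : ℕ} (hk : k < l.length) :
    appendStream l x k = l[k] := by
  simp [appendStream, hk]

theorem appendStream_apply_of_le {l : List E} (x : ℕ → E) {k : ℕ} (hk : l.length ≤ k) :
    appendStream l x k = x (k - l.length) := by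
  simp [appendStream, Nat.not_lt.mpr hk]

theorem appendStream_append (l₁ l₂ : List E) (x : ℕ → E) :
    appendStream (l₁ ++ l₂) x = appendStream l₁ (appendStream l₂ x) := by
  funext k
  simp only [appendStream, List.get_eq_getElem, List.length_append, List.getElem_append]
  split_ifs <;> first | rfl | omega | (congr 1; omega)

theorem appendStream_left_cancel {l : List E} {x y : ℕ → E}
    (h : appendStream l x = appendStream l y) : x = y := by
  funext k
  simpa [appendStream_apply_of_le] using congrFun h (l.length + k)

theorem take_eq_of_appendStream_eq {β α : List E} {x y : ℕ → E}
    (h : appendStream β x = appendStream α y) (hlen : β.length ≤ α.length) :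
    α.take β.length = β := by
  refine List.ext_getElem (by simpa using hlen) fun i hi _ => ?_
  have hiβ : i < β.length := by simp only [List.length_take] at hi; omega
  simpa [appendStream_apply_of_lt, hiβ, hiβ.trans_le hlen] using (congrFun h i).symm

namespace SSU

variable (U : SSU G V E)

theorem sP_append_of_ne_nil (β : List E) {γ : List E} (hγ : γ ≠ []) :
    U.sP (β ++ γ) = U.sP γ := by
  simp only [sP, List.getLast?_append_of_ne_nil β hγ]

theorem rP_eq_of_appendStream {γ : List E} (hγ : γ ≠ []) {x y : ℕ → E}
    (hx : x = appendStream γ y) : U.rP γ = {U.r (x 0)} := by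
  obtain ⟨e, γ, rfl⟩ := List.exists_cons_of_ne_nil hγ
  simp [rP, hx, appendStream_apply_of_lt]

end SSU

theorem theta_fixed_point_longer_general (U : SSU G V E) (g : G)
    (α β : List E) (A : Set V) (x : ℕ → E)
    (hlen : β.length < α.length)
    (hAs : A ⊆ U.sP α ∩ U.actV g '' U.sP β)
    (hdom : U.r (x 0) ∈ U.actV g⁻¹ '' A)
    (hfix : appendStream β x = appendStream α (U.actStream g x)) :
    ∃ γ : List E, γ ≠ [] ∧ α = β ++ γ ∧
      (U.actV g '' U.rP γ ⊆ U.sP γ) ∧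
      x = appendStream γ (U.actStream g x) := by
  set γ := α.drop β.length
  have hsplit : α = β ++ γ := by
    rw [← take_eq_of_appendStream_eq hfix hlen.le, List.take_append_drop]
  have hγ : γ ≠ [] := by simpa [γ, List.drop_eq_nil_iff] using hlen
  have hxγ : x = appendStream γ (U.actStream g x) := by
    rw [hsplit, appendStream_append] at hfix
    exact appendStream_left_cancel hfix
  refine ⟨γ, hγ, hsplit, ?_, hxγ⟩
  obtain ⟨a, haA, hax⟩ := hdom
  have hga : U.actV g (U.r (x 0)) = a := by
    rw [← hax, ← U.actV_mul, mul_inv_cancel, U.actV_one]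
  rw [U.rP_eq_of_appendStream hγ hxγ, Set.image_singleton, Set.singleton_subset_iff, hga,
    ← U.sP_append_of_ne_nil β hγ, ← hsplit]
  exact (hAs haA).1

/-- Let `s = (α, A, g, β) ∈ S_{G,U}` with `|α| > |β|`. If `θ_s` fixes a tight filter
`F_{βx}` for some infinite path `x` — i.e. (since `θ_s(F_{βx}) = F_{α(g·x)}` and
distinct infinite paths give distinct tight filters) `βx = α(g·x)` — then `α = βγ`
for some path `γ` of length `≥ 1`, the pair `(g, γ)` is a `G`-cycle
(`g·r(γ) ⊆ s(γ)`), and `x = γ(g·x)`. -/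
theorem theta_fixed_point_longer (U : SSU G V E) (g : G)
    (α β : List E) (A : Set V) (x : ℕ → E)
    (hlen : β.length < α.length)
    (hpα : U.IsPath α) (hpβ : U.IsPath β)
    (hx : ∀ k, U.r (x (k + 1)) ∈ U.s (x k))
    (hA : A.Nonempty) (hAs : A ⊆ U.sP α ∩ U.actV g '' U.sP β)
    (hdom : U.r (x 0) ∈ U.actV g⁻¹ '' A)
    (hfix : appendStream β x = appendStream α (U.actStream g x)) :
    ∃ γ : List E, γ ≠ [] ∧ α = β ++ γ ∧
      (U.actV g '' U.rP γ ⊆ U.sP γ) ∧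
      x = appendStream γ (U.actStream g x) :=
  theta_fixed_point_longer_general U g α β A x hlen hAs hdom hfix
end
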